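/- Let S(x,q) be a generating function on ℝ^m × (ℝ^n)^* and Φ_S^* the associated thick-morphism pull-back. Then for every g ∈ C^∞(ℝ^n) the components of the formal functional Φ_S^*(g) of order ≤ 3 are: [Φ_S^*(g)]_0 = S_0(x); [Φ_S^*(g)]_1 = g(S_1(x)); [Φ_S^*(g)]_2 = S_2^{ab}(x) g*_a(x) g*_b(x); and [Φ_S^*(g)]_3 = S_3^{abc}(x) g*_a(x) g*_b(x) g*_c(x) + 2 S_2^{ac}(x) S_2^{bd}(x) g*_{ab}(x) g*_c(x) g*_d(x), where g*_a(x) = (∂g/∂y^a)(S_1(x)) and g*_{ab}(x) = (∂²g/∂y^a∂y^b)(S_1(x)). -/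

import Mathlib

open scoped BigOperators

namespace ThickMorphism

/-- Real-valued functions on `ℝ^n` (the ambient space of `C^∞(ℝ^n)`). -/
abbrev Fn (n : ℕ) : Type := (Fin n → ℝ) → ℝ

/-- `ℝ^n`-valued functions on `ℝ^m`. -/
abbrev VFn (m n : ℕ) : Type := (Fin m → ℝ) → Fin n → ℝ

/-- `f` is a smooth (`C^∞`) function on `ℝ^n`. -/
def Sm {n : ℕ} (f : Fn n) : Prop := ContDiff ℝ (⊤ : ℕ∞) f

/-- `f` is a smooth (`C^∞`) map from `ℝ^m` to `ℝ^n`. -/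
def SmV {m n : ℕ} (f : VFn m n) : Prop := ContDiff ℝ (⊤ : ℕ∞) f

/-- The partial derivative `∂_b g`. -/
noncomputable def pd {n : ℕ} (b : Fin n) (g : Fn n) : Fn n :=
  fun y => fderiv ℝ g y (Pi.single b 1)

/-- The `a`-th coordinate function `y^a` on `ℝ^n`. -/
def coordFn {n : ℕ} (a : Fin n) : Fn n := fun y => y a

/-- Ordered tuples of `j` positive parts summing to `k` (parts coded in `Fin (k+1)`). -/
def parts (j k : ℕ) : Finset (Fin j → Fin (k + 1)) :=
  Finset.univ.filter fun t => (∑ i, (t i : ℕ)) = k ∧ ∀ i, 0 < (t i : ℕ)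

/-- Order-`k` component of the Taylor expansion (at `Y 0`) of `h ∘ Y`,
where `Y r` is the order-`r` component of a formal map with values in `ℝ^n`:
`Σ_{j} Σ_{r_1+⋯+r_j = k, r_i ≥ 1} (1/j!) ∂^j h (Y 0 x) (Y_{r_1}(x),…,Y_{r_j}(x))`. -/
noncomputable def taylorComp {m n : ℕ} (h : Fn n) (Y : ℕ → VFn m n) (k : ℕ) : Fn m :=
  fun x => ∑ j ∈ Finset.range (k + 1), ∑ t ∈ parts j k,
    ((Nat.factorial j : ℝ))⁻¹ * iteratedFDeriv ℝ j h (Y 0 x) (fun i => Y (t i : ℕ) x)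

/-- A formal functional from `C^∞(ℝ^n)` to `C^∞(ℝ^m)`: a sequence of symmetric
`k`-linear maps `B k` (the polarised forms), preserving smoothness; the order-`k`
component of the functional is the diagonal restriction `g ↦ B k (g,…,g)`. -/
structure FormalFunctional (n m : ℕ) where
  B : (k : ℕ) → MultilinearMap ℝ (fun _ : Fin k => Fn n) (Fn m)
  symm : ∀ (k : ℕ) (σ : Equiv.Perm (Fin k)) (v : Fin k → Fn n), B k (v ∘ σ) = B k v
  smooth : ∀ (k : ℕ) (v : Fin k → Fn n), (∀ i, Sm (v i)) → Sm (B k v)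

/-- The order-`k` component `L_k(g)` of a formal functional. -/
def FormalFunctional.ord {n m : ℕ} (L : FormalFunctional n m) (k : ℕ) (g : Fn n) : Fn m :=
  L.B k (fun _ => g)

/-- A formal map over `C^∞(ℝ^n)` with values in `ℝ^n`-valued functions on `ℝ^m`:
a sequence of symmetric `r`-linear maps `K r`; the order-`r` component at `g`
is the diagonal restriction. -/
structure FormalMap (n m : ℕ) where
  K : (r : ℕ) → MultilinearMap ℝ (fun _ : Fin r => Fn n) (VFn m n)
  symm : ∀ (r : ℕ) (σ : Equiv.Perm (Fin r)) (v : Fin r → Fn n), K r (v ∘ σ) = K r v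
  smooth : ∀ (r : ℕ) (v : Fin r → Fn n), (∀ i, Sm (v i)) → SmV (K r v)

/-- The order-`r` component `K_r(g)` of a formal map. -/
def FormalMap.ord {n m : ℕ} (K : FormalMap n m) (r : ℕ) (g : Fn n) : VFn m n :=
  K.K r (fun _ => g)

/-- The support map `K₀` of a formal map. -/
def FormalMap.supp {n m : ℕ} (K : FormalMap n m) : VFn m n :=
  K.K 0 (fun i => i.elim0)

/-- `L` is a non-linear homomorphism with associated formal map `K`: for all smooth
`g, h` and all `k`, the order-`k`-in-`g` component of the differential of `L` at `g`
in direction `h`, namely `(k+1)·B_{k+1}(h,g,…,g)`, equals the order-`k` component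
of the formal (Taylor) composition `h(K(g))`. -/
def IsNonlinearHomWith {n m : ℕ} (L : FormalFunctional n m) (K : FormalMap n m) : Prop :=
  ∀ (g h : Fn n), Sm g → Sm h → ∀ k : ℕ,
    ((k : ℝ) + 1) • L.B (k + 1) (Fin.cons h (fun _ => g)) =
      taylorComp h (fun r => K.ord r g) k

/-- `L` is a non-linear homomorphism. -/
def IsNonlinearHom {n m : ℕ} (L : FormalFunctional n m) : Prop :=
  ∃ K : FormalMap n m, IsNonlinearHomWith L K

/-- A generating function `S(x,q) = Σ_k S_k^{a_1…a_k}(x) q_{a_1}⋯q_{a_k}` of a thick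
morphism `ℝ^m ⇛ ℝ^n`: smooth symmetric tensors `S k x : (Fin k → Fin n) → ℝ`. -/
structure GenFn (m n : ℕ) where
  S : (k : ℕ) → (Fin m → ℝ) → (Fin k → Fin n) → ℝ
  symm : ∀ (k : ℕ) (σ : Equiv.Perm (Fin k)) (x : Fin m → ℝ) (a : Fin k → Fin n),
    S k x (a ∘ σ) = S k x a
  smooth : ∀ (k : ℕ) (a : Fin k → Fin n), Sm (fun x => S k x a)

/-- The first-order coefficient `S_1` of a generating function, as a map `ℝ^m → ℝ^n`. -/
def sOne {m n : ℕ} (S : GenFn m n) : VFn m n := fun x a => S.S 1 x (fun _ => a)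

/-- Order-`t`-in-`g` component (`t ≥ 1`) of `q_b = (∂_b g)(y(x,g))`, the formal map `y`
having components `Y`: it is the Taylor-composition component of order `t-1`. -/
noncomputable def qComp {m n : ℕ} (g : Fn n) (Y : ℕ → VFn m n) (b : Fin n) (t : ℕ) : Fn m :=
  taylorComp (pd b g) Y (t - 1)

/-- Order-`N`-in-`g` component of `∂S(x,q)/∂q_a` evaluated at `q_b = (∂_b g)(y(x,g))`,
where `y` has components `Y`. -/
noncomputable def dSComp {m n : ℕ} (S : GenFn m n) (g : Fn n) (Y : ℕ → VFn m n) (N : ℕ) :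
    VFn m n :=
  fun x a => ∑ j ∈ Finset.range (N + 1), ∑ b : Fin j → Fin n, ∑ t ∈ parts j N,
    ((j : ℝ) + 1) * S.S (j + 1) x (Fin.cons a b) * ∏ i, qComp g Y (b i) (t i : ℕ) x

/-- Auxiliary recursion: `thickYAux S g k r` is the order-`r` component `y_r(x,g)` of the
formal map of the thick morphism `Φ_S` for `r ≤ k` (and `0` for `r > k`). -/
noncomputable def thickYAux {m n : ℕ} (S : GenFn m n) (g : Fn n) : ℕ → ℕ → VFn m n
  | 0 => fun r => if r = 0 then (fun x a => S.S 1 x (fun _ => a)) else 0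
  | k + 1 => fun r =>
      if r = k + 1 then dSComp S g (thickYAux S g k) (k + 1) else thickYAux S g k r

/-- The order-`k` component `y_k(x,g)` of the formal map of the thick morphism `Φ_S`:
`y_0 = S_1`, and `y_{k+1}` is the order-`(k+1)`-in-`g` component of `∂S/∂q_a` at
`q = (∂g)(y_{≤k}(x,g))`. -/
noncomputable def thickY {m n : ℕ} (S : GenFn m n) (g : Fn n) (k : ℕ) : VFn m n :=
  thickYAux S g k k

/-- Order-`k`-in-`g` component of `S(x,q)` evaluated at `q = (∂g)(y(x,g))`. -/
noncomputable def SqComp {m n : ℕ} (S : GenFn m n) (g : Fn n) (k : ℕ) : Fn m :=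
  fun x => ∑ j ∈ Finset.range (k + 1), ∑ b : Fin j → Fin n, ∑ t ∈ parts j k,
    S.S j x b * ∏ i, qComp g (thickY S g) (b i) (t i : ℕ) x

/-- Order-`k`-in-`g` component of `y^a q_a` at `y = y(x,g)`, `q = (∂g)(y(x,g))`. -/
noncomputable def yqComp {m n : ℕ} (S : GenFn m n) (g : Fn n) (k : ℕ) : Fn m :=
  fun x => ∑ a : Fin n, ∑ t ∈ Finset.Icc 1 k,
    thickY S g (k - t) x a * qComp g (thickY S g) a t x

/-- The order-`k`-in-`g` component of the thick-morphism pull-back `Φ_S^*(g)`, i.e. of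
`g(y) + S(x,q) − y^a q_a` at `y = y(x,g)`, `q = (∂g)(y(x,g))`, all compositions being
expanded by Taylor series at `y_0 = S_1(x)`. -/
noncomputable def thickPull {m n : ℕ} (S : GenFn m n) (g : Fn n) (k : ℕ) : Fn m :=
  fun x =>
    (if k = 0 then 0 else taylorComp g (thickY S g) (k - 1) x)
      + SqComp S g k x - yqComp S g k x

/-- The coordinate functions are smooth. -/
lemma coordFn_smooth {n : ℕ} (a : Fin n) : Sm (coordFn a) :=
  (ContinuousLinearMap.proj a : (Fin n → ℝ) →L[ℝ] ℝ).contDiff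

/-- The generating function `S_L` associated with a formal functional `L`:
`S_k^{a_1…a_k}(x) = B_k(y^{a_1},…,y^{a_k})(x)`, the polarised forms of `L`
evaluated on the coordinate functions of `ℝ^n`. -/
noncomputable def assocGen {n m : ℕ} (L : FormalFunctional n m) : GenFn m n where
  S := fun k x a => L.B k (fun i => coordFn (a i)) x
  symm := by
    intro k σ x a
    have h := L.symm k σ (fun i => coordFn (a i))
    exact congrFun h x
  smooth := fun k a => L.smooth k _ (fun i => coordFn_smooth (a i))

/-- Truncation of a generating function to degree `≤ k` in `q`. -/
noncomputable def truncGen {m n : ℕ} (S : GenFn m n) (k : ℕ) : GenFn m n where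
  S := fun i x a => if i ≤ k then S.S i x a else 0
  symm := by
    intro i σ x a
    by_cases h : i ≤ k <;> simp [h, S.symm]
  smooth := by
    intro i a
    by_cases h : i ≤ k
    · simpa [Sm, h] using S.smooth i a
    · simpa [Sm, h] using (contDiff_const : ContDiff ℝ (⊤ : ℕ∞) fun _ : Fin m → ℝ => (0 : ℝ))

/-! Everything is obtained by unwinding the recursion to order three. At order three the
contributions of `y₂` and of the top-order part `q₃` of `q` cancel between `g(y)`, `S(x,q)` and
`y^a q_a`, because the expression is stationary in `y` and `q`. Since `y₁^a = 2 S₂^{ab} g*_b` and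
`S₂` is symmetric, the cross terms `S₂^{cd} (g*_c q₂_d + q₂_c g*_d)` cancel against `y₁^a q₂_a`
as well, so only the Taylor term `½ g*_{ab} y₁^a y₁^b = 2 S₂^{ac} S₂^{bd} g*_{ab} g*_c g*_d`
survives. -/

lemma _root_.ContinuousLinearMap.apply_eq_sum_single {ι F : Type*} [Fintype ι] [DecidableEq ι]
    [NormedAddCommGroup F] [NormedSpace ℝ F] (L : (ι → ℝ) →L[ℝ] F) (v : ι → ℝ) :
    L v = ∑ a, v a • L (Pi.single a 1) := by
  conv_lhs => rw [pi_eq_sum_univ' v]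
  simp only [map_sum, map_smul]

lemma sum_fin_succ_arrow {α M : Type*} [Fintype α] [AddCommMonoid M] {k : ℕ}
    (f : (Fin (k + 1) → α) → M) :
    ∑ b, f b = ∑ a, ∑ b : Fin k → α, f (Matrix.vecCons a b) := by
  rw [← Fintype.sum_prod_type']
  exact (Fintype.sum_equiv (Fin.consEquiv fun _ => α) _ _ fun _ => rfl).symm

lemma sum_sum_mul_add_mul_of_symm {ι : Type*} [Fintype ι] (A : ι → ι → ℝ)
    (hA : ∀ c d, A c d = A d c) (u v : ι → ℝ) :
    ∑ c, ∑ d, A c d * (u c * v d + v c * u d) = ∑ c, (∑ d, 2 * A c d * u d) * v c := by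
  simp only [mul_add, Finset.sum_add_distrib, Finset.sum_mul]
  rw [Finset.sum_comm (f := fun c d => A c d * (u c * v d))]
  rw [← Finset.sum_add_distrib]
  refine Finset.sum_congr rfl fun c _ => ?_
  rw [← Finset.sum_add_distrib]
  refine Finset.sum_congr rfl fun d _ => ?_
  rw [hA d c]; ring

lemma inv_two_mul_sum_sum_mul_mul {ι : Type*} [Fintype ι] (A H : ι → ι → ℝ) (u : ι → ℝ) :
    2⁻¹ * ∑ a, ∑ b, (∑ c, 2 * A a c * u c) * (∑ d, 2 * A b d * u d) * H a b
      = ∑ a, ∑ b, ∑ c, ∑ d, 2 * A a c * A b d * H a b * u c * u d := by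
  simp only [Finset.sum_mul_sum]
  simp only [Finset.mul_sum, Finset.sum_mul]
  refine Finset.sum_congr rfl fun a _ => Finset.sum_congr rfl fun b _ =>
    Finset.sum_congr rfl fun c _ => Finset.sum_congr rfl fun d _ => by ring

lemma parts_zero_zero : parts 0 0 = {![]} := by decide

lemma parts_zero_succ (k : ℕ) : parts 0 (k + 1) = ∅ := by
  ext t
  simp [parts]

lemma parts_one (k : ℕ) : parts 1 (k + 1) = {![Fin.last (k + 1)]} := by
  ext t
  simp only [parts, Finset.mem_filter, Finset.mem_univ, true_and, Finset.mem_singleton,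
    Fin.sum_univ_one, Fin.forall_fin_one, funext_iff, Fin.ext_iff, Matrix.cons_val_zero,
    Fin.val_last]
  omega

lemma parts_two_two : parts 2 2 = {![1, 1]} := by decide

lemma parts_two_three : parts 2 3 = {![1, 2], ![2, 1]} := by decide

lemma parts_three_three : parts 3 3 = {![1, 1, 1]} := by decide

section Coordinates

variable {n : ℕ}

lemma fderiv_apply_eq_sum_pd (h : Fn n) (y v : Fin n → ℝ) :
    fderiv ℝ h y v = ∑ a, v a * pd a h y :=
  (fderiv ℝ h y).apply_eq_sum_single v

lemma fderiv_fderiv_single {h : Fn n} {y : Fin n → ℝ}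
    (hh : DifferentiableAt ℝ (fderiv ℝ h) y) (a b : Fin n) :
    fderiv ℝ (fderiv ℝ h) y (Pi.single a 1) (Pi.single b 1) = pd a (pd b h) y := by
  unfold pd
  rw [fderiv_clm_apply hh (differentiableAt_const _)]
  simp

lemma fderiv_fderiv_apply_eq_sum_pd_pd {h : Fn n} {y : Fin n → ℝ}
    (hh : DifferentiableAt ℝ (fderiv ℝ h) y) (v w : Fin n → ℝ) :
    fderiv ℝ (fderiv ℝ h) y v w = ∑ a, ∑ b, v a * w b * pd a (pd b h) y := by
  rw [(fderiv ℝ (fderiv ℝ h) y).apply_eq_sum_single v, sum_apply]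
  refine Finset.sum_congr rfl fun a _ => ?_
  rw [smul_apply, ContinuousLinearMap.apply_eq_sum_single _ w,
    Finset.smul_sum]
  refine Finset.sum_congr rfl fun b _ => ?_
  rw [fderiv_fderiv_single hh, smul_eq_mul, smul_eq_mul]
  ring

end Coordinates

section Taylor

variable {m n : ℕ} (h : Fn n) (Y : ℕ → VFn m n) (x : Fin m → ℝ)

lemma taylorComp_zero : taylorComp h Y 0 x = h (Y 0 x) := by
  simp [taylorComp, parts_zero_zero]

lemma taylorComp_one : taylorComp h Y 1 x = ∑ a, Y 1 x a * pd a h (Y 0 x) := by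
  simp [taylorComp, Finset.sum_range_succ, parts_zero_succ, parts_one,
    iteratedFDeriv_one_apply, fderiv_apply_eq_sum_pd]

lemma taylorComp_two (hh : DifferentiableAt ℝ (fderiv ℝ h) (Y 0 x)) :
    taylorComp h Y 2 x = (∑ a, Y 2 x a * pd a h (Y 0 x))
      + 2⁻¹ * ∑ a, ∑ b, Y 1 x a * Y 1 x b * pd a (pd b h) (Y 0 x) := by
  simp [taylorComp, Finset.sum_range_succ, parts_zero_succ, parts_one, parts_two_two,
    iteratedFDeriv_one_apply, fderiv_apply_eq_sum_pd, iteratedFDeriv_two_apply,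
    fderiv_fderiv_apply_eq_sum_pd_pd hh]

end Taylor

lemma GenFn.S_two_comm {m n : ℕ} (S : GenFn m n) (x : Fin m → ℝ) (a b : Fin n) :
    S.S 2 x ![a, b] = S.S 2 x ![b, a] := by
  rw [← S.symm 2 (Equiv.swap 0 1) x ![b, a]]
  congr 1
  ext i
  fin_cases i <;> rfl

section Components

variable {m n : ℕ} (S : GenFn m n) (g : Fn n) (x : Fin m → ℝ)

lemma S_one_eq_sOne (a : Fin n) : S.S 1 x ![a] = sOne S x a := by
  rw [Matrix.vec_single_eq_const]
  rfl

lemma qComp_one (Y : ℕ → VFn m n) (c : Fin n) :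
    qComp g Y c 1 x = pd c g (Y 0 x) :=
  taylorComp_zero _ _ _

lemma thickYAux_zero_zero : thickYAux S g 0 0 = sOne S := rfl

lemma thickY_zero : thickY S g 0 = sOne S := rfl

lemma thickY_succ (k : ℕ) : thickY S g (k + 1) = dSComp S g (thickYAux S g k) (k + 1) := by
  simp [thickY, thickYAux]

lemma thickY_one (a : Fin n) :
    thickY S g 1 x a = ∑ b, 2 * S.S 2 x ![a, b] * pd b g (sOne S x) := by
  rw [thickY_succ, dSComp]
  norm_num [Finset.sum_range_succ, parts_zero_succ, parts_one, sum_fin_succ_arrow,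
    qComp_one, thickYAux_zero_zero, Matrix.Fin.cons_vecCons, Matrix.empty_eq]

lemma SqComp_zero : SqComp S g 0 x = S.S 0 x (fun i => i.elim0) := by
  simp [SqComp, parts_zero_zero, Matrix.empty_eq]

lemma SqComp_one : SqComp S g 1 x = ∑ c, sOne S x c * pd c g (sOne S x) := by
  simp [SqComp, Finset.sum_range_succ, parts_zero_succ, parts_one, sum_fin_succ_arrow,
    qComp_one, thickY_zero, S_one_eq_sOne, Matrix.empty_eq]

lemma SqComp_two : SqComp S g 2 x =
    (∑ c, sOne S x c * qComp g (thickY S g) c 2 x)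
      + ∑ c, ∑ d, S.S 2 x ![c, d] * (pd c g (sOne S x) * pd d g (sOne S x)) := by
  simp [SqComp, Finset.sum_range_succ, parts_zero_succ, parts_one, parts_two_two,
    sum_fin_succ_arrow, qComp_one, thickY_zero, S_one_eq_sOne, Fin.prod_univ_succ, Matrix.empty_eq]

lemma SqComp_three : SqComp S g 3 x =
    (∑ c, sOne S x c * qComp g (thickY S g) c 3 x)
      + (∑ c, ∑ d, (S.S 2 x ![c, d] * (pd c g (sOne S x) * qComp g (thickY S g) d 2 x)
            + S.S 2 x ![c, d] * (qComp g (thickY S g) c 2 x * pd d g (sOne S x))))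
      + ∑ c, ∑ d, ∑ e, S.S 3 x ![c, d, e] *
          (pd c g (sOne S x) * (pd d g (sOne S x) * pd e g (sOne S x))) := by
  simp [SqComp, Finset.sum_range_succ, parts_zero_succ, parts_one, parts_two_three,
    parts_three_three, sum_fin_succ_arrow, qComp_one, thickY_zero, S_one_eq_sOne,
    Fin.prod_univ_succ, Matrix.empty_eq]

lemma yqComp_zero : yqComp S g 0 x = 0 := by
  simp [yqComp]

lemma yqComp_one : yqComp S g 1 x = ∑ c, sOne S x c * pd c g (sOne S x) := by
  simp [yqComp, qComp_one, thickY_zero]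

lemma yqComp_two : yqComp S g 2 x =
    ∑ c, (thickY S g 1 x c * pd c g (sOne S x)
      + sOne S x c * qComp g (thickY S g) c 2 x) := by
  simp [yqComp, Finset.sum_Icc_succ_top, qComp_one, thickY_zero]

lemma yqComp_three : yqComp S g 3 x =
    ∑ c, (thickY S g 2 x c * pd c g (sOne S x)
      + thickY S g 1 x c * qComp g (thickY S g) c 2 x
      + sOne S x c * qComp g (thickY S g) c 3 x) := by
  simp [yqComp, Finset.sum_Icc_succ_top, qComp_one, thickY_zero]

end Components

section PullBack

variable {m n : ℕ} (S : GenFn m n) (g : Fn n) (x : Fin m → ℝ)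

lemma thickPull_zero : thickPull S g 0 x = S.S 0 x (fun i => i.elim0) := by
  simp only [thickPull, if_pos, SqComp_zero, yqComp_zero]
  ring

lemma thickPull_one : thickPull S g 1 x = g (sOne S x) := by
  simp only [thickPull, one_ne_zero, if_false, Nat.sub_self, taylorComp_zero, thickY_zero,
    SqComp_one, yqComp_one]
  ring

lemma thickPull_two : thickPull S g 2 x =
    ∑ a, ∑ b, S.S 2 x ![a, b] * pd a g (sOne S x) * pd b g (sOne S x) := by
  simp only [thickPull, OfNat.ofNat_ne_zero, if_false, Nat.add_one_sub_one, taylorComp_one,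
    thickY_zero, SqComp_two, yqComp_two, Finset.sum_add_distrib, mul_assoc]
  ring

lemma thickPull_three (hg : DifferentiableAt ℝ (fderiv ℝ g) (sOne S x)) :
    thickPull S g 3 x =
      (∑ a, ∑ b, ∑ c,
        S.S 3 x ![a, b, c] * pd a g (sOne S x) * pd b g (sOne S x) * pd c g (sOne S x))
      + ∑ a, ∑ b, ∑ c, ∑ d, 2 * S.S 2 x ![a, c] * S.S 2 x ![b, d] *
          pd a (pd b g) (sOne S x) * pd c g (sOne S x) * pd d g (sOne S x) := by
  have hS2 : ∑ c, ∑ d, (S.S 2 x ![c, d] * (pd c g (sOne S x) * qComp g (thickY S g) d 2 x)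
      + S.S 2 x ![c, d] * (qComp g (thickY S g) c 2 x * pd d g (sOne S x)))
      = ∑ c, thickY S g 1 x c * qComp g (thickY S g) c 2 x := by
    simp only [← mul_add, sum_sum_mul_add_mul_of_symm _ (S.S_two_comm x), thickY_one]
  have hY1 := inv_two_mul_sum_sum_mul_mul (fun a c => S.S 2 x ![a, c])
    (fun a b => pd a (pd b g) (sOne S x)) (fun c => pd c g (sOne S x))
  simp only [← thickY_one] at hY1
  simp only [thickPull, OfNat.ofNat_ne_zero, if_false, Nat.add_one_sub_one,
    taylorComp_two g (thickY S g) x hg, SqComp_three, yqComp_three, hS2]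
  simp only [thickY_zero, Finset.sum_add_distrib, mul_assoc] at hY1 ⊢
  linear_combination hY1

end PullBack

/-- The components of order `≤ 3` of the thick-morphism pull-back:
`[Φ_S^*(g)]_0 = S_0(x)`, `[Φ_S^*(g)]_1 = g(S_1(x))`,
`[Φ_S^*(g)]_2 = S_2^{ab}(x) g*_a(x) g*_b(x)`, and
`[Φ_S^*(g)]_3 = S_3^{abc} g*_a g*_b g*_c + 2 S_2^{ac} S_2^{bd} g*_{ab} g*_c g*_d`,
where `g*_a(x) = (∂_a g)(S_1(x))` and `g*_{ab}(x) = (∂_a ∂_b g)(S_1(x))`. -/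
theorem thickPull_components {m n : ℕ} (S : GenFn m n) (g : Fn n) (hg : Sm g)
    (x : Fin m → ℝ) :
    thickPull S g 0 x = S.S 0 x (fun i => i.elim0)
    ∧ thickPull S g 1 x = g (sOne S x)
    ∧ thickPull S g 2 x =
        ∑ a : Fin n, ∑ b : Fin n, S.S 2 x ![a, b] * pd a g (sOne S x) * pd b g (sOne S x)
    ∧ thickPull S g 3 x =
        (∑ a : Fin n, ∑ b : Fin n, ∑ c : Fin n,
          S.S 3 x ![a, b, c] * pd a g (sOne S x) * pd b g (sOne S x) * pd c g (sOne S x))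
        + ∑ a : Fin n, ∑ b : Fin n, ∑ c : Fin n, ∑ d : Fin n,
            2 * S.S 2 x ![a, c] * S.S 2 x ![b, d] *
              pd a (pd b g) (sOne S x) * pd c g (sOne S x) * pd d g (sOne S x) := by
  have hg2 : Differentiable ℝ (fderiv ℝ g) :=
    (hg.fderiv_right (m := 1) (by norm_cast)).differentiable one_ne_zero
  exact ⟨thickPull_zero S g x, thickPull_one S g x, thickPull_two S g x,
    thickPull_three S g x (hg2 _)⟩

end ThickMorphism
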